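/- Let $T \geq 1$, $\lambda > 0$, and let $K_T$ be the $T \times T$ matrix with $[K_T]_{ij} = \min(i,j)$. Then the effective dimension satisfies $\mathrm{Tr}\big(K_T (\lambda I + K_T)^{-1}\big) \leq \frac{\pi T}{2\sqrt{\lambda}}$. -/

import Mathlib

/-!
The matrix `K = (min (i, j))` is inverted by the second-difference matrix `L`
(`(L x)ᵢ = 2xᵢ - xᵢ₋₁ - xᵢ₊₁` with `x₀ = 0`, `x_{T+1} = x_T`), because each column `min (·, j)`
of `K` is piecewise linear with a single kink at `j`. The sine vectors `sin (i θₖ)` with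
`θₖ = (2k+1)π/(2T+1)` satisfy both boundary conditions, hence are eigenvectors of `L` with
eigenvalues `νₖ = 2 - 2 cos θₖ`. Since `K (λ + K)⁻¹ = (1 + λL)⁻¹`, the trace is
`∑ₖ 1 / (1 + λνₖ)`. Jordan's inequality gives `λνₖ ≥ (b(2k+1))²` with `b = 2√λ/(2T+1)`, and
comparing `1 / (1 + (b(2k+1))²)` with increments of `arctan` bounds the sum by
`(1 + π)/(4b) ≤ πT/(2√λ)`.
-/

open Matrix Finset Real

lemma Matrix.mul_inv_smul_one_add {n R : Type*} [Fintype n] [DecidableEq n] [CommRing R]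
    {A B : Matrix n n R} (h : B * A = 1) (c : R) : A * (c • 1 + A)⁻¹ = (1 + c • B)⁻¹ := by
  have hfactor : c • 1 + A = (1 + c • B) * A := by
    rw [add_mul, one_mul, smul_mul, h, add_comm]
  rw [hfactor, mul_inv_rev, inv_eq_left_inv h, ← mul_assoc, mul_eq_one_comm.mp h, one_mul]

lemma Matrix.trace_inv_eq_sum_of_mul_eq_mul_diagonal {n 𝕜 : Type*} [Fintype n] [DecidableEq n]
    [Field 𝕜] {M V : Matrix n n 𝕜} {d : n → 𝕜} (hV : IsUnit V)
    (hMV : M * V = V * diagonal d) (hd : ∀ k, d k ≠ 0) :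
    M⁻¹.trace = ∑ k, (d k)⁻¹ := by
  have hdet : IsUnit V.det := (isUnit_iff_isUnit_det V).mp hV
  have hM : M = V * diagonal d * V⁻¹ := by
    rw [← hMV, mul_assoc, mul_nonsing_inv V hdet, mul_one]
  have hMinv : M⁻¹ = V * diagonal (fun k => (d k)⁻¹) * V⁻¹ := by
    refine inv_eq_right_inv ?_
    simp only [hM, mul_assoc, nonsing_inv_mul_cancel_left (h := hdet)]
    rw [← mul_assoc (diagonal d), diagonal_mul_diagonal]
    simp [hd, mul_nonsing_inv V hdet]
  rw [hMinv, trace_conj hV, trace_diagonal]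

lemma inv_one_add_sq_mul_sub_le_arctan_sub {x y : ℝ} (hx : 0 ≤ x) (hxy : x ≤ y) :
    (1 + y ^ 2)⁻¹ * (y - x) ≤ arctan y - arctan x := by
  refine (convex_Icc x y).mul_sub_le_image_sub_of_le_deriv continuous_arctan.continuousOn
    differentiable_arctan.differentiableOn (fun t ht => ?_) x ⟨le_rfl, hxy⟩ y ⟨hxy, le_rfl⟩ hxy
  rw [interior_Icc] at ht
  simp only [Real.deriv_arctan, one_div]
  gcongr
  · linarith [ht.1]
  · exact ht.2.le

lemma sum_range_succ_inv_one_add_sq_odd_le {b : ℝ} (hb : 0 < b) (n : ℕ) :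
    ∑ k ∈ range (n + 1), (1 + (b * (2 * k + 1)) ^ 2)⁻¹
      ≤ (1 + 2 * arctan (b * (2 * n + 1))) / (4 * b) := by
  induction n with
  | zero =>
    have hslope := inv_one_add_sq_mul_sub_le_arctan_sub le_rfl hb.le
    have hamgm : 2 * b ≤ 1 + b ^ 2 := by nlinarith [sq_nonneg (b - 1)]
    rw [sub_zero, arctan_zero, sub_zero] at hslope
    rw [le_div_iff₀ (by positivity)]
    simp only [sum_range_one, CharP.cast_eq_zero, mul_zero, zero_add, mul_one]
    have : (1 + b ^ 2)⁻¹ * (2 * b) ≤ 1 := by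
      rw [inv_mul_le_iff₀ (by positivity)]
      linarith
    linarith
  | succ n ih =>
    have hslope := inv_one_add_sq_mul_sub_le_arctan_sub (x := b * (2 * n + 1))
      (y := b * (2 * (n + 1 : ℕ) + 1)) (by positivity) (by push_cast; nlinarith)
    rw [sum_range_succ]
    calc _ ≤ (1 + 2 * arctan (b * (2 * n + 1))) / (4 * b)
          + (1 + (b * (2 * (n + 1 : ℕ) + 1)) ^ 2)⁻¹ := by gcongr
      _ ≤ _ := by
        rw [div_add' _ _ _ (by positivity), div_le_div_iff_of_pos_right (by positivity)]
        have : b * (2 * (n + 1 : ℕ) + 1) - b * (2 * n + 1) = 2 * b := by push_cast; ring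
        rw [this] at hslope
        linarith

-- `tridiag (-1, 2, -1)` with last diagonal entry `1`
def mixedLaplacian (R : Type*) [Ring R] (T : ℕ) : Matrix (Fin T) (Fin T) R :=
  of fun i j => (if j.val = i.val then 2 else 0) - (if j.val = i.val + 1 then 1 else 0)
    - (if j.val + 1 = i.val then 1 else 0) - (if j.val = i.val ∧ i.val + 1 = T then 1 else 0)

section

variable {R : Type*} [Ring R]

lemma sum_fin_ite_val_eq {T : ℕ} (f : ℕ → R) (n : ℕ) :
    ∑ j : Fin T, (if j.val = n then f j.val else 0) = if n < T then f n else 0 := by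
  rw [Fin.sum_univ_eq_sum_range (fun m => if m = n then f m else 0)]
  simp only [sum_ite_eq', mem_range]

lemma mixedLaplacian_mulVec {T : ℕ} (x : ℕ → R) (h0 : x 0 = 0) (hT : x (T + 1) = x T)
    (i : Fin T) :
    (mixedLaplacian R T *ᵥ fun j => x (j.val + 1)) i
      = 2 * x (i.val + 1) - x i.val - x (i.val + 2) := by
  obtain ⟨i, hi⟩ := i
  have hsub : ∑ j : Fin T, (if j.val + 1 = i then x (j.val + 1) else 0) = x i := by
    cases i with
    | zero => simp [h0]
    | succ n =>
      simp only [Nat.add_right_cancel_iff]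
      rw [sum_fin_ite_val_eq (fun m => x (m + 1)), if_pos (by omega)]
  have hlast : ∑ j : Fin T, (if j.val = i ∧ i + 1 = T then x (j.val + 1) else 0)
      = if i + 1 = T then x (i + 1) else 0 := by
    split_ifs with h
    · simp only [and_iff_left h]
      rw [sum_fin_ite_val_eq (fun m => x (m + 1)), if_pos hi]
    · simp [h]
  simp only [mulVec, dotProduct, mixedLaplacian, of_apply, sub_mul, ite_mul, zero_mul,
    sum_sub_distrib, one_mul]
  rw [sum_fin_ite_val_eq (fun m => 2 * x (m + 1)), sum_fin_ite_val_eq (fun m => x (m + 1)),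
    hsub, hlast, if_pos hi]
  rcases (Nat.succ_le_of_lt hi).lt_or_eq with h | h
  · rw [if_pos h, if_neg h.ne]
    abel
  · subst h
    rw [if_neg (lt_irrefl _), if_pos rfl, hT]
    abel

end

def minMatrix (T : ℕ) : Matrix (Fin T) (Fin T) ℝ :=
  of fun i j => min (i.val + 1 : ℝ) (j.val + 1)

lemma two_mul_min_sub_min_sub_min (i j : ℕ) :
    2 * min (i + 1 : ℝ) (j + 1) - min (i : ℝ) (j + 1) - min (i + 2 : ℝ) (j + 1)
      = if i = j then 1 else 0 := by
  rcases lt_trichotomy i j with h | rfl | h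
  · have : (i : ℝ) + 1 ≤ j := by exact_mod_cast h
    rw [if_neg h.ne, min_eq_left (by linarith), min_eq_left (by linarith),
      min_eq_left (by linarith)]
    ring
  · rw [if_pos rfl, min_self, min_eq_left (by linarith), min_eq_right (by linarith)]
    ring
  · have : (j : ℝ) + 1 ≤ i := by exact_mod_cast h
    rw [if_neg h.ne', min_eq_right (by linarith), min_eq_right (by linarith),
      min_eq_right (by linarith)]
    ring

lemma mixedLaplacian_mul_minMatrix (T : ℕ) : mixedLaplacian ℝ T * minMatrix T = 1 := by
  ext i j
  have hT : min ((T : ℝ) + 1) (j.val + 1) = min (T : ℝ) (j.val + 1) := by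
    have : (j.val : ℝ) + 1 ≤ T := by exact_mod_cast j.isLt
    rw [min_eq_right (by linarith), min_eq_right this]
  have h := mixedLaplacian_mulVec (fun m : ℕ => min (m : ℝ) (j.val + 1))
    (by simp only [Nat.cast_zero]; exact min_eq_left (by positivity))
    (by push_cast; exact hT) i
  push_cast at h
  rw [two_mul_min_sub_min_sub_min] at h
  simp only [one_apply, Fin.ext_iff, ← h]
  rfl

noncomputable def eigenAngle (T k : ℕ) : ℝ := (2 * k + 1) * π / (2 * T + 1)

noncomputable def laplacianEigenvalue (T k : ℕ) : ℝ := 2 - 2 * cos (eigenAngle T k)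

noncomputable def sineMatrix (T : ℕ) : Matrix (Fin T) (Fin T) ℝ :=
  of fun i k => sin ((i.val + 1) * eigenAngle T k.val)

lemma sin_succ_mul_eigenAngle (T k : ℕ) :
    sin ((T + 1) * eigenAngle T k) = sin (T * eigenAngle T k) := by
  have h : (T + 1) * eigenAngle T k = ((2 * k + 1 : ℕ) : ℝ) * π - T * eigenAngle T k := by
    unfold eigenAngle
    field_simp
    push_cast
    ring
  rw [h, sin_nat_mul_pi_sub, (odd_two_mul_add_one k).neg_one_pow]
  ring

lemma two_mul_sin_sub_sin_sub_sin (x θ : ℝ) :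
    2 * sin x - sin (x - θ) - sin (x + θ) = (2 - 2 * cos θ) * sin x := by
  rw [sin_sub, sin_add]
  ring

lemma eigenAngle_pos (T k : ℕ) : 0 < eigenAngle T k := by
  unfold eigenAngle
  positivity

lemma eigenAngle_lt_pi {T k : ℕ} (hk : k < T) : eigenAngle T k < π := by
  unfold eigenAngle
  rw [div_lt_iff₀ (by positivity)]
  have : (k : ℝ) < T := by exact_mod_cast hk
  nlinarith [pi_pos]

lemma eigenAngle_injective (T : ℕ) : Function.Injective (eigenAngle T) := by
  intro k l h
  unfold eigenAngle at h
  field_simp at h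
  exact_mod_cast (by linarith : (k : ℝ) = l)

lemma sq_two_mul_eigenAngle_div_pi_le {T k : ℕ} (hk : k < T) :
    (2 * eigenAngle T k / π) ^ 2 ≤ laplacianEigenvalue T k := by
  have h := cos_le_one_sub_mul_cos_sq
    (abs_le.mpr ⟨by linarith [pi_pos, eigenAngle_pos T k], (eigenAngle_lt_pi hk).le⟩)
  calc (2 * eigenAngle T k / π) ^ 2 = 2 * (2 / π ^ 2 * eigenAngle T k ^ 2) := by
        field_simp
    _ ≤ laplacianEigenvalue T k := by
        unfold laplacianEigenvalue
        linarith

lemma laplacianEigenvalue_pos {T k : ℕ} (hk : k < T) : 0 < laplacianEigenvalue T k :=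
  (pow_pos (by have := eigenAngle_pos T k; positivity) 2).trans_le
    (sq_two_mul_eigenAngle_div_pi_le hk)

lemma mixedLaplacian_mulVec_col_sineMatrix {T : ℕ} (k : Fin T) :
    mixedLaplacian ℝ T *ᵥ (sineMatrix T).col k
      = laplacianEigenvalue T k • (sineMatrix T).col k := by
  ext i
  have h := mixedLaplacian_mulVec (fun m : ℕ => sin (m * eigenAngle T k)) (by simp)
    (by push_cast; exact sin_succ_mul_eigenAngle T k) i
  simp only [Nat.cast_add, Nat.cast_one, Nat.cast_ofNat] at h
  have hx : ((i : ℕ) + 1 : ℝ) * eigenAngle T k - eigenAngle T k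
      = (i : ℕ) * eigenAngle T k := by ring
  have hy : ((i : ℕ) + 1 : ℝ) * eigenAngle T k + eigenAngle T k
      = ((i : ℕ) + 2 : ℝ) * eigenAngle T k := by ring
  rw [Pi.smul_apply, smul_eq_mul, col_apply, sineMatrix, of_apply, laplacianEigenvalue,
    ← two_mul_sin_sub_sin_sub_sin, hx, hy, ← h]
  rfl

lemma mixedLaplacian_mul_sineMatrix (T : ℕ) :
    mixedLaplacian ℝ T * sineMatrix T
      = sineMatrix T * diagonal fun k : Fin T => laplacianEigenvalue T k := by
  ext i k
  rw [mul_diagonal, mul_comm (sineMatrix T i k)]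
  exact congrFun (mixedLaplacian_mulVec_col_sineMatrix k) i

lemma isUnit_sineMatrix (T : ℕ) : IsUnit (sineMatrix T) := by
  rw [← linearIndependent_cols_iff_isUnit]
  refine Module.End.eigenvectors_linearIndependent' (mulVecLin (mixedLaplacian ℝ T))
    (fun k : Fin T => laplacianEigenvalue T k) ?_ _ fun k => ⟨?_, ?_⟩
  · intro k l h
    have hcos : cos (eigenAngle T k) = cos (eigenAngle T l) := by
      simp only [laplacianEigenvalue] at h
      linarith
    have hmem (m : Fin T) : eigenAngle T m ∈ Set.Icc 0 π :=
      ⟨(eigenAngle_pos T m).le, (eigenAngle_lt_pi m.isLt).le⟩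
    exact Fin.ext (eigenAngle_injective T (injOn_cos (hmem k) (hmem l) hcos))
  · rw [Module.End.mem_eigenspace_iff, mulVecLin_apply, mixedLaplacian_mulVec_col_sineMatrix]
  · intro h0
    have h00 : sin (eigenAngle T k) = 0 := by
      simpa [sineMatrix] using congrFun h0 ⟨0, k.pos⟩
    exact (sin_pos_of_pos_of_lt_pi (eigenAngle_pos T k) (eigenAngle_lt_pi k.isLt)).ne' h00

lemma trace_minMatrix_mul_inv_smul_one_add (T : ℕ) {lam : ℝ} (hlam : 0 ≤ lam) :
    (minMatrix T * (lam • 1 + minMatrix T)⁻¹).trace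
      = ∑ k : Fin T, (1 + lam * laplacianEigenvalue T k)⁻¹ := by
  rw [mul_inv_smul_one_add (mixedLaplacian_mul_minMatrix T)]
  refine trace_inv_eq_sum_of_mul_eq_mul_diagonal (isUnit_sineMatrix T) ?_ fun k => ?_
  · rw [add_mul, one_mul, smul_mul, mixedLaplacian_mul_sineMatrix]
    ext i k
    simp only [Matrix.add_apply, Matrix.smul_apply, mul_diagonal, smul_eq_mul]
    ring
  · have := laplacianEigenvalue_pos k.isLt
    positivity

lemma sum_inv_one_add_mul_laplacianEigenvalue_le {T : ℕ} (hT : 1 ≤ T) {lam : ℝ}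
    (hlam : 0 < lam) :
    ∑ k : Fin T, (1 + lam * laplacianEigenvalue T k)⁻¹ ≤ π * T / (2 * √lam) := by
  set b := 2 * √lam / (2 * T + 1) with hb_def
  have hb : 0 < b := by positivity
  have hterm (k : Fin T) :
      (1 + lam * laplacianEigenvalue T k)⁻¹ ≤ (1 + (b * (2 * k.val + 1)) ^ 2)⁻¹ := by
    have hsq : (b * (2 * k.val + 1)) ^ 2 = lam * (2 * eigenAngle T k / π) ^ 2 := by
      rw [← sq_sqrt hlam.le, eigenAngle, hb_def]
      field_simp
    have := sq_two_mul_eigenAngle_div_pi_le k.isLt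
    gcongr
    rw [hsq]
    gcongr
  obtain ⟨n, rfl⟩ : ∃ n, T = n + 1 := ⟨T - 1, by omega⟩
  calc ∑ k : Fin (n + 1), (1 + lam * laplacianEigenvalue (n + 1) k)⁻¹
      ≤ ∑ k ∈ range (n + 1), (1 + (b * (2 * k + 1)) ^ 2)⁻¹ := by
        rw [← Fin.sum_univ_eq_sum_range (fun k => (1 + (b * (2 * k + 1)) ^ 2)⁻¹)]
        exact sum_le_sum fun k _ => hterm k
    _ ≤ (1 + 2 * arctan (b * (2 * n + 1))) / (4 * b) := sum_range_succ_inv_one_add_sq_odd_le hb n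
    _ ≤ (1 + π) / (4 * b) := by
        gcongr
        linarith [arctan_lt_pi_div_two (b * (2 * n + 1))]
    _ ≤ π * (n + 1 : ℕ) / (2 * √lam) := by
        have hT' : (1 : ℝ) ≤ (n + 1 : ℕ) := by exact_mod_cast hT
        rw [hb_def, div_le_div_iff₀ (by positivity) (by positivity)]
        field_simp
        nlinarith [pi_gt_three, sqrt_pos.mpr hlam]

/-- Effective-dimension bound for the spline kernel matrix `[K_T]_{ij} = min(i,j)`:
`Tr(K_T (λI + K_T)⁻¹) ≤ πT / (2√λ)`. -/
theorem effective_dimension_bound (T : ℕ) (hT : 1 ≤ T) (lam : ℝ) (hlam : 0 < lam)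
    (K : Matrix (Fin T) (Fin T) ℝ)
    (hK : ∀ i j, K i j = min (i.val + 1 : ℝ) (j.val + 1)) :
    (K * (lam • (1 : Matrix (Fin T) (Fin T) ℝ) + K)⁻¹).trace
      ≤ Real.pi * T / (2 * Real.sqrt lam) := by
  obtain rfl : K = minMatrix T := Matrix.ext hK
  rw [trace_minMatrix_mul_inv_smul_one_add T hlam.le]
  exact sum_inv_one_add_mul_laplacianEigenvalue_le hT hlam
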